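/- arXiv:2202.01243 — 4 statements merged into one kernel-verified Lean document; each statement's English description precedes it below -/
import Mathlib

section
/- Let 0 < σ₀ < σ₁ and set α := sqrt( σ₀² σ₁² log(σ₁²/σ₀²) / (σ₁² − σ₀²) ). Let P₀ = N(0, σ₀²) and P₁ = N(0, σ₁²) be the centered Gaussian measures on ℝ with these variances, and let 𝒜*(ŷ) := 1[ŷ² > α²] be the threshold test. Then the membership advantage of 𝒜* equals Adv(𝒜*) = P₁({ŷ : ŷ² > α²}) − P₀({ŷ : ŷ² > α²}) = 2·(Φ(α/σ₀) − Φ(α/σ₁)), where Φ denotes the cumulative distribution function of the standard normal distribution. -/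
open MeasureTheory ProbabilityTheory
open scoped NNReal

/-- The standard normal cumulative distribution function
`Φ(t) = ∫_{−∞}^t (2π)^{−1/2} e^{−s²/2} ds`. -/
noncomputable def stdNormalCDF (t : ℝ) : ℝ :=
  ∫ s in Set.Iic t, (Real.sqrt (2 * Real.pi))⁻¹ * Real.exp (-s ^ 2 / 2)

lemma stdNormalCDF_eq (t : ℝ) :
    stdNormalCDF t = ((gaussianReal 0 1) (Set.Iic t)).toReal := by
  rw [gaussianReal_apply_eq_integral 0 one_ne_zero (Set.Iic t),
    ENNReal.toReal_ofReal]
  · unfold stdNormalCDF gaussianPDFReal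
    norm_num
  · exact integral_nonneg fun x => gaussianPDFReal_nonneg 0 1 x

lemma gaussianReal_neg (s : Set ℝ) (hs : MeasurableSet s) :
    (gaussianReal 0 1) ((fun x : ℝ => -x) ⁻¹' s) = (gaussianReal 0 1) s := by
  have h := gaussianReal_map_const_mul (μ := 0) (v := 1) (-1)
  have h1 : (NNReal.mk ((-1:ℝ)^2) (sq_nonneg _)) * 1 = 1 := by
    ext; norm_num
  rw [mul_zero, h1] at h
  conv_rhs => rw [← h]
  rw [Measure.map_apply (measurable_const_mul _) hs]
  congr 1
  ext x
  simp

lemma gaussianReal_sq_gt (t : ℝ) (ht : 0 ≤ t) :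
    ((gaussianReal 0 1) {x : ℝ | x ^ 2 > t ^ 2}).toReal = 2 * (1 - stdNormalCDF t) := by
  have hset : {x : ℝ | x ^ 2 > t ^ 2} = Set.Iio (-t) ∪ Set.Ioi t := by
    ext x
    simp only [Set.mem_setOf_eq, Set.mem_union, Set.mem_Iio, Set.mem_Ioi, gt_iff_lt]
    constructor
    · intro h
      rcases le_or_gt x 0 with hx | hx
      · left; nlinarith
      · right; nlinarith
    · rintro (h | h) <;> nlinarith
  have hdisj : Disjoint (Set.Iio (-t)) (Set.Ioi t) := by
    rw [Set.disjoint_left]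
    intro x hx hx'
    simp only [Set.mem_Iio, Set.mem_Ioi] at hx hx'
    linarith
  have hIio : (gaussianReal 0 1) (Set.Iio (-t)) = (gaussianReal 0 1) (Set.Ioi t) := by
    rw [← gaussianReal_neg (Set.Iio (-t)) measurableSet_Iio]
    congr 1
    ext x
    simp
  have hIoi : ((gaussianReal 0 1) (Set.Ioi t)).toReal = 1 - stdNormalCDF t := by
    rw [← Set.compl_Iic, measure_compl measurableSet_Iic (measure_ne_top _ _), measure_univ,
      ENNReal.toReal_sub_of_le prob_le_one (by simp), stdNormalCDF_eq]
    simp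
  rw [hset, measure_union hdisj measurableSet_Ioi, ENNReal.toReal_add
    (measure_ne_top _ _) (measure_ne_top _ _), hIio, hIoi]
  ring

lemma gaussianReal_scale (σ : ℝ) (hσ : 0 < σ) (a : ℝ) :
    (gaussianReal 0 ⟨σ ^ 2, sq_nonneg σ⟩) {y : ℝ | y ^ 2 > a ^ 2} =
      (gaussianReal 0 1) {x : ℝ | x ^ 2 > (a / σ) ^ 2} := by
  have h := gaussianReal_map_const_mul (μ := 0) (v := 1) σ
  have h1 : (NNReal.mk (σ^2) (sq_nonneg _)) * 1 = ⟨σ^2, sq_nonneg σ⟩ := mul_one _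
  rw [mul_zero, h1] at h
  rw [← h, Measure.map_apply (measurable_const_mul _)
    (show MeasurableSet {y : ℝ | y ^ 2 > a ^ 2} from
      measurableSet_lt measurable_const (measurable_id.pow_const 2))]
  congr 1
  ext x
  simp only [Set.mem_preimage, Set.mem_setOf_eq, gt_iff_lt]
  rw [mul_pow, div_pow]
  rw [div_lt_iff₀ (by positivity)]
  constructor <;> intro hh <;> nlinarith [sq_nonneg σ]

/-- **Membership advantage of the threshold test between two centered Gaussians.**
For `0 < σ₀ < σ₁` and `α = sqrt(σ₀²σ₁²log(σ₁²/σ₀²)/(σ₁² − σ₀²))`, the test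
`𝒜*(ŷ) = 1[ŷ² > α²]` has membership advantage
`P₁({ŷ² > α²}) − P₀({ŷ² > α²}) = 2(Φ(α/σ₀) − Φ(α/σ₁))` where `P i = N(0, σᵢ²)`. -/
theorem advantage_of_threshold_test (σ₀ σ₁ : ℝ) (h₀ : 0 < σ₀) (h₀₁ : σ₀ < σ₁)
    (α : ℝ)
    (hα : α = Real.sqrt (σ₀ ^ 2 * σ₁ ^ 2 * Real.log (σ₁ ^ 2 / σ₀ ^ 2) / (σ₁ ^ 2 - σ₀ ^ 2))) :
    ((gaussianReal 0 ⟨σ₁ ^ 2, sq_nonneg σ₁⟩) {y : ℝ | y ^ 2 > α ^ 2}).toReal -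
        ((gaussianReal 0 ⟨σ₀ ^ 2, sq_nonneg σ₀⟩) {y : ℝ | y ^ 2 > α ^ 2}).toReal =
      2 * (stdNormalCDF (α / σ₀) - stdNormalCDF (α / σ₁)) := by
  have h₁ : 0 < σ₁ := h₀.trans h₀₁
  have hα0 : 0 ≤ α := hα ▸ Real.sqrt_nonneg _
  rw [gaussianReal_scale σ₀ h₀ α, gaussianReal_scale σ₁ h₁ α,
    gaussianReal_sq_gt (α / σ₀) (by positivity), gaussianReal_sq_gt (α / σ₁) (by positivity)]
  ring
end

section
/- Fix σ₁ > 0 and for 0 < σ₀ < σ₁ define α(σ₀) := sqrt( σ₀² σ₁² log(σ₁²/σ₀²) / (σ₁² − σ₀²) ) and the membership advantage A(σ₀) := 2·(Φ(α(σ₀)/σ₀) − Φ(α(σ₀)/σ₁)), where Φ is the standard normal CDF. Then A(σ₀) → 1 as σ₀ → 0⁺. In particular, the optimal membership inference advantage between N(0, σ₀²) and N(0, σ₁²) tends to 1 as the variance of the non-member output distribution tends to 0 while the member output variance stays fixed. -/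
open Filter Topology

namespace StdNormalAux

noncomputable def f (s : ℝ) : ℝ := (Real.sqrt (2 * Real.pi))⁻¹ * Real.exp (-s ^ 2 / 2)

lemma f_eq (s : ℝ) : f s = (Real.sqrt (2 * Real.pi))⁻¹ * Real.exp (-(1/2) * s ^ 2) := by
  unfold f; ring_nf

lemma integrable_f : MeasureTheory.Integrable f := by
  have : MeasureTheory.Integrable (fun s : ℝ => Real.exp (-(1/2 : ℝ) * s ^ 2)) :=
    integrable_exp_neg_mul_sq (by norm_num)
  have h := this.const_mul (Real.sqrt (2 * Real.pi))⁻¹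
  exact h.congr (by filter_upwards with s using (f_eq s).symm)

lemma integral_f : ∫ s : ℝ, f s = 1 := by
  have h2π : (0:ℝ) < Real.sqrt (2 * Real.pi) :=
    Real.sqrt_pos.2 (by positivity)
  have : ∫ s : ℝ, Real.exp (-(1/2 : ℝ) * s ^ 2) = Real.sqrt (Real.pi / (1/2)) :=
    integral_gaussian (1/2)
  have hval : Real.sqrt (Real.pi / (1/2 : ℝ)) = Real.sqrt (2 * Real.pi) := by
    norm_num [mul_comm]
  calc ∫ s : ℝ, f s = ∫ s : ℝ, (Real.sqrt (2 * Real.pi))⁻¹ * Real.exp (-(1/2) * s ^ 2) := by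
        simp_rw [f_eq]
    _ = (Real.sqrt (2 * Real.pi))⁻¹ * ∫ s : ℝ, Real.exp (-(1/2 : ℝ) * s ^ 2) := by
        rw [MeasureTheory.integral_const_mul]
    _ = 1 := by rw [this, hval]; field_simp

lemma cdf_eq (t : ℝ) : stdNormalCDF t = ∫ s in Set.Iic t, f s := rfl

lemma cdf_tendsto_one : Tendsto stdNormalCDF atTop (𝓝 1) := by
  have h := (MeasureTheory.aecover_Iic (μ := (MeasureTheory.volume : MeasureTheory.Measure ℝ))
      (l := atTop) (b := fun t : ℝ => t) tendsto_id).integral_tendsto_of_countably_generated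
      integrable_f
  rw [integral_f] at h
  exact h.congr (fun t => (cdf_eq t).symm)

lemma cdf_zero : stdNormalCDF 0 = 1 / 2 := by
  have hint : MeasureTheory.IntegrableOn f (Set.Iic 0) := integrable_f.integrableOn
  have hint' : MeasureTheory.IntegrableOn f (Set.Ioi 0) := integrable_f.integrableOn
  have hsym : ∫ s in Set.Iic (0:ℝ), f s = ∫ s in Set.Ioi (0:ℝ), f s := by
    have := integral_comp_neg_Iic (0:ℝ) f
    rw [neg_zero] at this
    rw [← this]
    refine MeasureTheory.setIntegral_congr_fun measurableSet_Iic (fun x _ => ?_)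
    unfold f; rw [neg_pow]; norm_num
  have hsplit : (∫ s in Set.Iic (0:ℝ), f s) + ∫ s in Set.Ioi (0:ℝ), f s = 1 := by
    rw [← MeasureTheory.setIntegral_union (Set.Iic_disjoint_Ioi le_rfl) measurableSet_Ioi
      hint hint', Set.Iic_union_Ioi, MeasureTheory.Measure.restrict_univ, integral_f]
  rw [cdf_eq]
  linarith [hsym, hsplit]

set_option maxHeartbeats 1000000 in
lemma cdf_continuous : Continuous stdNormalCDF := by
  have key : ∀ t : ℝ, stdNormalCDF t = stdNormalCDF 0 + ∫ s in (0:ℝ)..t, f s := by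
    intro t
    have ha : MeasureTheory.IntegrableOn f (Set.Iic 0) := integrable_f.integrableOn
    have hb : MeasureTheory.IntegrableOn f (Set.Iic t) := integrable_f.integrableOn
    have := intervalIntegral.integral_Iic_sub_Iic ha hb
    rw [cdf_eq, cdf_eq]
    linarith [this]
  have : Continuous fun t : ℝ => stdNormalCDF 0 + ∫ s in (0:ℝ)..t, f s :=
    continuous_const.add (integrable_f.continuous_primitive 0)
  exact this.congr (fun t => (key t).symm)

lemma sqrt_tendsto_atTop : Tendsto Real.sqrt atTop atTop := by
  refine tendsto_atTop.2 fun b => ?_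
  filter_upwards [eventually_ge_atTop (b * b)] with x hx
  calc b ≤ |b| := le_abs_self b
    _ = Real.sqrt (b * b) := (Real.sqrt_mul_self_eq_abs b).symm
    _ ≤ Real.sqrt x := Real.sqrt_le_sqrt hx

end StdNormalAux

/-- **The optimal membership advantage tends to 1 as the non-member variance vanishes.**
Fix `σ₁ > 0` and let `α(σ₀) = sqrt(σ₀²σ₁²log(σ₁²/σ₀²)/(σ₁² − σ₀²))` and
`A(σ₀) = 2(Φ(α(σ₀)/σ₀) − Φ(α(σ₀)/σ₁))`.  Then `A(σ₀) → 1` as `σ₀ → 0⁺`. -/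
theorem advantage_tendsto_one (σ₁ : ℝ) (hσ₁ : 0 < σ₁)
    (α A : ℝ → ℝ)
    (hα : ∀ σ₀, α σ₀ =
      Real.sqrt (σ₀ ^ 2 * σ₁ ^ 2 * Real.log (σ₁ ^ 2 / σ₀ ^ 2) / (σ₁ ^ 2 - σ₀ ^ 2)))
    (hA : ∀ σ₀, A σ₀ = 2 * (stdNormalCDF (α σ₀ / σ₀) - stdNormalCDF (α σ₀ / σ₁))) :
    Tendsto A (𝓝[>] (0 : ℝ)) (𝓝 1) := by
  -- eventually 0 < σ₀ < σ₁
  have hmem : ∀ᶠ σ₀ in 𝓝[>] (0:ℝ), 0 < σ₀ ∧ σ₀ < σ₁ := by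
    filter_upwards [self_mem_nhdsWithin,
      Ioo_mem_nhdsGT_of_mem (Set.left_mem_Ico.2 hσ₁)] with x hx hx'
    exact ⟨hx, hx'.2⟩
  -- first argument tends to atTop
  have h1 : Tendsto (fun σ₀ => α σ₀ / σ₀) (𝓝[>] (0:ℝ)) atTop := by
    -- α σ₀ / σ₀ ≥ sqrt (log (σ₁²/σ₀²)) eventually
    have hlog : Tendsto (fun σ₀ : ℝ => Real.log (σ₁ ^ 2 / σ₀ ^ 2)) (𝓝[>] (0:ℝ)) atTop := by
      apply Real.tendsto_log_atTop.comp
      have : Tendsto (fun σ₀ : ℝ => σ₀ ^ 2) (𝓝[>] (0:ℝ)) (𝓝[>] 0) := by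
        apply tendsto_nhdsWithin_of_tendsto_nhds_of_eventually_within
        · exact ((continuous_pow 2).tendsto' 0 0 (by norm_num)).mono_left nhdsWithin_le_nhds
        · filter_upwards [self_mem_nhdsWithin] with x hx using pow_pos (Set.mem_Ioi.1 hx) 2
      have h2 : Tendsto (fun y : ℝ => σ₁ ^ 2 / y) (𝓝[>] (0:ℝ)) atTop := by
        have := tendsto_inv_nhdsGT_zero (𝕜 := ℝ)
        have := this.const_mul_atTop (show (0:ℝ) < σ₁ ^ 2 by positivity)
        exact this.congr (fun y => by rw [div_eq_mul_inv])
      exact h2.comp this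
    have hsq := StdNormalAux.sqrt_tendsto_atTop.comp hlog
    refine tendsto_atTop_mono' _ ?_ hsq
    filter_upwards [hmem, hlog.eventually (eventually_ge_atTop 0)] with σ₀ hσ hL
    obtain ⟨h0, h01⟩ := hσ
    have hσsq : σ₀ ^ 2 < σ₁ ^ 2 := by nlinarith
    have hden : (0:ℝ) < σ₁ ^ 2 - σ₀ ^ 2 := by linarith
    have heq : α σ₀ / σ₀
        = Real.sqrt (σ₁ ^ 2 * Real.log (σ₁ ^ 2 / σ₀ ^ 2) / (σ₁ ^ 2 - σ₀ ^ 2)) := by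
      rw [hα]
      have hval : σ₀ ^ 2 * σ₁ ^ 2 * Real.log (σ₁ ^ 2 / σ₀ ^ 2) / (σ₁ ^ 2 - σ₀ ^ 2)
          = σ₀ ^ 2 * (σ₁ ^ 2 * Real.log (σ₁ ^ 2 / σ₀ ^ 2) / (σ₁ ^ 2 - σ₀ ^ 2)) := by ring
      rw [hval, Real.sqrt_mul (by positivity), Real.sqrt_sq h0.le,
        mul_div_cancel_left₀ _ (ne_of_gt h0)]
    rw [heq]
    simp only [Function.comp_apply]
    apply Real.sqrt_le_sqrt
    rw [le_div_iff₀ hden]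
    nlinarith [sq_nonneg σ₀, hL]
  -- second argument tends to 0
  have h2 : Tendsto (fun σ₀ => α σ₀ / σ₁) (𝓝[>] (0:ℝ)) (𝓝 0) := by
    have hxlx : Tendsto (fun x : ℝ => Real.log x * x) (𝓝[>] (0:ℝ)) (𝓝 0) := by
      have := tendsto_log_mul_rpow_nhdsGT_zero (one_pos)
      refine this.congr' ?_
      filter_upwards [self_mem_nhdsWithin] with x hx
      rw [Real.rpow_one]
    -- σ₀² log(σ₁²/σ₀²) → 0
    have hinner : Tendsto (fun σ₀ : ℝ => σ₀ ^ 2 * Real.log (σ₁ ^ 2 / σ₀ ^ 2))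
        (𝓝[>] (0:ℝ)) (𝓝 0) := by
      have hsqmap : Tendsto (fun σ₀ : ℝ => σ₀ ^ 2) (𝓝[>] (0:ℝ)) (𝓝[>] 0) := by
        apply tendsto_nhdsWithin_of_tendsto_nhds_of_eventually_within
        · exact ((continuous_pow 2).tendsto' 0 0 (by norm_num)).mono_left nhdsWithin_le_nhds
        · filter_upwards [self_mem_nhdsWithin] with x hx using pow_pos (Set.mem_Ioi.1 hx) 2
      -- x * log (σ₁²/x) = x * log σ₁² − log x * x, with x = σ₀² → 0⁺
      have key : Tendsto (fun x : ℝ => x * Real.log (σ₁ ^ 2 / x)) (𝓝[>] (0:ℝ)) (𝓝 0) := by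
        have hconst : Tendsto (fun x : ℝ => x * Real.log (σ₁ ^ 2)) (𝓝[>] (0:ℝ)) (𝓝 0) := by
          have h := ((continuous_mul_right (Real.log (σ₁ ^ 2))).tendsto'
            (0:ℝ) 0 (by simp)).mono_left (nhdsWithin_le_nhds (s := Set.Ioi (0:ℝ)))
          exact h
        have hcomb := hconst.sub hxlx
        rw [sub_zero] at hcomb
        refine hcomb.congr' ?_
        filter_upwards [self_mem_nhdsWithin] with x hx
        have hx0 : x ≠ 0 := ne_of_gt hx
        rw [Real.log_div (by positivity) hx0]
        ring
      exact key.comp hsqmap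
    have hα0 : Tendsto α (𝓝[>] (0:ℝ)) (𝓝 0) := by
      have hdeninv : Tendsto (fun σ₀ : ℝ => (σ₁ ^ 2 - σ₀ ^ 2)⁻¹) (𝓝[>] (0:ℝ))
          (𝓝 (σ₁ ^ 2)⁻¹) := by
        have : Tendsto (fun σ₀ : ℝ => σ₁ ^ 2 - σ₀ ^ 2) (𝓝 (0:ℝ)) (𝓝 (σ₁ ^ 2)) :=
          (continuous_const.sub (continuous_pow 2)).tendsto' 0 (σ₁ ^ 2) (by simp)
        exact (this.mono_left nhdsWithin_le_nhds).inv₀ (by positivity)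
      have hprod : Tendsto (fun σ₀ : ℝ =>
          σ₀ ^ 2 * σ₁ ^ 2 * Real.log (σ₁ ^ 2 / σ₀ ^ 2) / (σ₁ ^ 2 - σ₀ ^ 2))
          (𝓝[>] (0:ℝ)) (𝓝 0) := by
        have := (hinner.mul_const (σ₁ ^ 2)).mul hdeninv
        rw [zero_mul, zero_mul] at this
        refine this.congr (fun x => ?_)
        rw [div_eq_mul_inv]; ring
      have := (Real.continuous_sqrt.tendsto' 0 0 (by simp)).comp hprod
      refine this.congr (fun x => ?_)
      rw [hα]
      rfl
    have := hα0.div_const σ₁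
    simpa using this
  -- assemble
  have hΦ1 : Tendsto (fun σ₀ => stdNormalCDF (α σ₀ / σ₀)) (𝓝[>] (0:ℝ)) (𝓝 1) :=
    StdNormalAux.cdf_tendsto_one.comp h1
  have hΦ2 : Tendsto (fun σ₀ => stdNormalCDF (α σ₀ / σ₁)) (𝓝[>] (0:ℝ)) (𝓝 (1/2)) := by
    have := (StdNormalAux.cdf_continuous.tendsto 0).comp h2
    rwa [StdNormalAux.cdf_zero] at this
  have : Tendsto (fun σ₀ => 2 * (stdNormalCDF (α σ₀ / σ₀) - stdNormalCDF (α σ₀ / σ₁)))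
      (𝓝[>] (0:ℝ)) (𝓝 (2 * (1 - 1/2))) := ((hΦ1.sub hΦ2)).const_mul 2
  norm_num at this
  exact this.congr (fun x => (hA x).symm)
end

section
/- Let 0 < σ₀ < σ₁ and let P₀ = N(0, σ₀²), P₁ = N(0, σ₁²) be the centered Gaussian measures on ℝ. Then the supremum of P₁(A) − P₀(A) over all Borel sets A ⊆ ℝ (equivalently, the total variation distance between P₁ and P₀) is attained at A* = {x : x² > α²} and equals 2·(Φ(α/σ₀) − Φ(α/σ₁)), where α := sqrt( σ₀² σ₁² log(σ₁²/σ₀²) / (σ₁² − σ₀²) ) and Φ is the standard normal CDF. -/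
open MeasureTheory ProbabilityTheory
open scoped NNReal

lemma gaussianPDFReal_one_eq :
    gaussianPDFReal 0 1 = fun s : ℝ => (Real.sqrt (2 * Real.pi))⁻¹ * Real.exp (-s ^ 2 / 2) := by
  ext s
  simp [gaussianPDFReal, sub_zero]

lemma stdNormalCDF_eq_integral (t : ℝ) :
    stdNormalCDF t = ∫ s in Set.Iic t, gaussianPDFReal 0 1 s := by
  rw [gaussianPDFReal_one_eq, stdNormalCDF]

lemma stdNormalCDF_neg (u : ℝ) : stdNormalCDF (-u) = 1 - stdNormalCDF u := by
  have hint : Integrable (gaussianPDFReal 0 1) := integrable_gaussianPDFReal 0 1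
  have heven : ∀ x : ℝ, gaussianPDFReal 0 1 (-x) = gaussianPDFReal 0 1 x := by
    intro x; simp [gaussianPDFReal, sub_zero, neg_sq]
  have h1 : stdNormalCDF (-u) = ∫ x in Set.Ioi u, gaussianPDFReal 0 1 x := by
    rw [stdNormalCDF_eq_integral]
    rw [show (∫ s in Set.Iic (-u), gaussianPDFReal 0 1 s)
        = ∫ s in Set.Iic (-u), gaussianPDFReal 0 1 (-s) by
      exact setIntegral_congr_fun measurableSet_Iic fun x _ => (heven x).symm]
    rw [integral_comp_neg_Iic]
    norm_num
  have h2 : (∫ x in Set.Iic u, gaussianPDFReal 0 1 x) + ∫ x in Set.Ioi u, gaussianPDFReal 0 1 x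
      = 1 := by
    rw [show Set.Ioi u = (Set.Iic u)ᶜ by simp]
    rw [integral_add_compl measurableSet_Iic hint]
    exact integral_gaussianPDFReal_eq_one 0 one_ne_zero
  rw [h1, stdNormalCDF_eq_integral]
  linarith

lemma nnne (σ : ℝ) (hσ : 0 < σ) : (⟨σ ^ 2, sq_nonneg σ⟩ : ℝ≥0) ≠ 0 := by
  intro h
  have := congrArg NNReal.toReal h
  change σ ^ 2 = 0 at this
  exact (pow_pos hσ 2).ne' this

lemma toReal_gauss (σ : ℝ) (hσ : 0 < σ) (s : Set ℝ) :
    ((gaussianReal 0 ⟨σ ^ 2, sq_nonneg σ⟩) s).toReal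
      = ∫ x in s, gaussianPDFReal 0 ⟨σ ^ 2, sq_nonneg σ⟩ x := by
  rw [gaussianReal_apply_eq_integral _ (nnne σ hσ)]
  exact ENNReal.toReal_ofReal (integral_nonneg fun x => gaussianPDFReal_nonneg _ _ _)

lemma std_tail (c : ℝ) (hc : 0 ≤ c) :
    ((gaussianReal 0 1) {x : ℝ | x ^ 2 > c ^ 2}).toReal = 2 * (1 - stdNormalCDF c) := by
  have hset : {x : ℝ | x ^ 2 > c ^ 2} = Set.Iio (-c) ∪ Set.Ioi c := by
    ext x
    simp only [Set.mem_setOf_eq, Set.mem_union, Set.mem_Iio, Set.mem_Ioi, gt_iff_lt]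
    constructor
    · intro h
      by_contra hx
      push_neg at hx
      nlinarith [hx.1, hx.2]
    · rintro (h | h) <;> nlinarith
  have hint : Integrable (gaussianPDFReal 0 1) := integrable_gaussianPDFReal 0 1
  have h1 : (⟨(1:ℝ)^2, sq_nonneg 1⟩ : ℝ≥0) = 1 := by ext; norm_num
  have key := toReal_gauss 1 one_pos {x : ℝ | x ^ 2 > c ^ 2}
  rw [h1] at key
  rw [show ((gaussianReal 0 1) {x : ℝ | x ^ 2 > c ^ 2}).toReal
      = ∫ x in {x : ℝ | x ^ 2 > c ^ 2}, gaussianPDFReal 0 1 x from key]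
  rw [hset]
  rw [setIntegral_union ((Set.Iio_disjoint_Ici (by linarith)).mono_right Set.Ioi_subset_Ici_self) measurableSet_Ioi
    hint.integrableOn hint.integrableOn]
  have hIio : (∫ x in Set.Iio (-c), gaussianPDFReal 0 1 x) = 1 - stdNormalCDF c := by
    rw [← integral_Iic_eq_integral_Iio, ← stdNormalCDF_eq_integral, stdNormalCDF_neg]
  have hIoi : (∫ x in Set.Ioi c, gaussianPDFReal 0 1 x) = 1 - stdNormalCDF c := by
    have h2 : (∫ x in Set.Iic c, gaussianPDFReal 0 1 x)
        + ∫ x in Set.Ioi c, gaussianPDFReal 0 1 x = 1 := by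
      rw [show Set.Ioi c = (Set.Iic c)ᶜ by simp]
      rw [integral_add_compl measurableSet_Iic hint]
      exact integral_gaussianPDFReal_eq_one 0 one_ne_zero
    rw [← stdNormalCDF_eq_integral] at h2
    linarith
  rw [hIio, hIoi]; ring

lemma gauss_tail (σ c : ℝ) (hσ : 0 < σ) (hc : 0 ≤ c) :
    ((gaussianReal 0 ⟨σ ^ 2, sq_nonneg σ⟩) {x : ℝ | x ^ 2 > c ^ 2}).toReal
      = 2 * (1 - stdNormalCDF (c / σ)) := by
  have hmap : (gaussianReal 0 1).map (σ * ·) = gaussianReal 0 ⟨σ ^ 2, sq_nonneg σ⟩ := by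
    have := gaussianReal_map_const_mul (μ := 0) (v := 1) σ
    simp at this
    exact this
  have hmeas : MeasurableSet {x : ℝ | x ^ 2 > c ^ 2} :=
    measurableSet_lt measurable_const (measurable_id.pow_const 2)
  rw [← hmap, Measure.map_apply (measurable_const_mul σ) hmeas]
  have hpre : (σ * ·) ⁻¹' {x : ℝ | x ^ 2 > c ^ 2} = {x : ℝ | x ^ 2 > (c / σ) ^ 2} := by
    ext x
    simp only [Set.mem_preimage, Set.mem_setOf_eq, gt_iff_lt]
    rw [mul_pow, div_pow]
    rw [div_lt_iff₀ (by positivity), mul_comm (σ ^ 2)]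
  rw [hpre, std_tail (c / σ) (by positivity)]

lemma pdf_le_iff_aux (va vb : ℝ≥0) (ha : 0 < (va : ℝ)) (hb : 0 < (vb : ℝ)) (x : ℝ) :
    gaussianPDFReal 0 va x ≤ gaussianPDFReal 0 vb x ↔
      -(Real.log va) / 2 - x ^ 2 / (2 * va) ≤ -(Real.log vb) / 2 - x ^ 2 / (2 * vb) := by
  have h2pi : (0:ℝ) < 2 * Real.pi := by positivity
  rw [gaussianPDFReal, gaussianPDFReal]
  rw [← Real.log_le_log_iff (by positivity) (by positivity)]
  rw [Real.log_mul (by positivity) (Real.exp_ne_zero _),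
    Real.log_mul (by positivity) (Real.exp_ne_zero _), Real.log_exp, Real.log_exp,
    Real.log_inv, Real.log_inv, Real.log_sqrt (by positivity), Real.log_sqrt (by positivity),
    Real.log_mul (ne_of_gt h2pi) (ne_of_gt ha), Real.log_mul (ne_of_gt h2pi) (ne_of_gt hb)]
  constructor <;> intro h <;> · simp only [sub_zero] at * ; ring_nf at * ; linarith

lemma div_form (va vb A B x : ℝ) (ha : 0 < va) (hb : 0 < vb) :
    (-A / 2 - x ^ 2 / (2 * va) ≤ -B / 2 - x ^ 2 / (2 * vb)) ↔
      va * vb * (B - A) ≤ x ^ 2 * (vb - va) := by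
  rw [← sub_nonneg]
  have e : (-B / 2 - x ^ 2 / (2 * vb)) - (-A / 2 - x ^ 2 / (2 * va))
      = (x ^ 2 * (vb - va) - va * vb * (B - A)) / (2 * va * vb) := by
    field_simp; ring
  rw [e, le_div_iff₀ (by positivity), zero_mul, sub_nonneg]

/-- **The optimal membership advantage between two centered Gaussians.**
For `0 < σ₀ < σ₁` and `P i = N(0, σᵢ²)`, the supremum of `P₁(A) − P₀(A)` over Borel
sets `A ⊆ ℝ` is attained at `A* = {x : x² > α²}` with
`α = sqrt(σ₀²σ₁²log(σ₁²/σ₀²)/(σ₁² − σ₀²))`, and equals `2(Φ(α/σ₀) − Φ(α/σ₁))`. -/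
theorem optimal_advantage_gaussians (σ₀ σ₁ : ℝ) (h₀ : 0 < σ₀) (h₀₁ : σ₀ < σ₁)
    (α : ℝ)
    (hα : α = Real.sqrt (σ₀ ^ 2 * σ₁ ^ 2 * Real.log (σ₁ ^ 2 / σ₀ ^ 2) / (σ₁ ^ 2 - σ₀ ^ 2)))
    (P₀ P₁ : Measure ℝ)
    (hP₀ : P₀ = gaussianReal 0 ⟨σ₀ ^ 2, sq_nonneg σ₀⟩)
    (hP₁ : P₁ = gaussianReal 0 ⟨σ₁ ^ 2, sq_nonneg σ₁⟩) :
    IsGreatest {d : ℝ | ∃ A : Set ℝ, MeasurableSet A ∧ d = (P₁ A).toReal - (P₀ A).toReal}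
        ((P₁ {x : ℝ | x ^ 2 > α ^ 2}).toReal - (P₀ {x : ℝ | x ^ 2 > α ^ 2}).toReal) ∧
      (P₁ {x : ℝ | x ^ 2 > α ^ 2}).toReal - (P₀ {x : ℝ | x ^ 2 > α ^ 2}).toReal =
        2 * (stdNormalCDF (α / σ₀) - stdNormalCDF (α / σ₁)) := by
  have h₁ : 0 < σ₁ := h₀.trans h₀₁
  have hv : σ₀ ^ 2 < σ₁ ^ 2 := by nlinarith
  have hα0 : 0 ≤ α := hα ▸ Real.sqrt_nonneg _
  have hlog : Real.log (σ₁ ^ 2 / σ₀ ^ 2) = Real.log (σ₁ ^ 2) - Real.log (σ₀ ^ 2) :=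
    Real.log_div (by positivity) (by positivity)
  have hlognn : 0 ≤ Real.log (σ₁ ^ 2 / σ₀ ^ 2) :=
    Real.log_nonneg (by rw [le_div_iff₀ (by positivity)]; nlinarith)
  have hK : α ^ 2 = σ₀ ^ 2 * σ₁ ^ 2 * (Real.log (σ₁ ^ 2) - Real.log (σ₀ ^ 2))
      / (σ₁ ^ 2 - σ₀ ^ 2) := by
    have hargnn : 0 ≤ σ₀ ^ 2 * σ₁ ^ 2 * Real.log (σ₁ ^ 2 / σ₀ ^ 2) / (σ₁ ^ 2 - σ₀ ^ 2) :=
      div_nonneg (mul_nonneg (by positivity) hlognn) (by linarith)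
    rw [hα, Real.sq_sqrt hargnn, hlog]
  -- pointwise comparison of densities
  have hcomp : ∀ x : ℝ,
      gaussianPDFReal 0 ⟨σ₀ ^ 2, sq_nonneg σ₀⟩ x ≤ gaussianPDFReal 0 ⟨σ₁ ^ 2, sq_nonneg σ₁⟩ x ↔
        α ^ 2 ≤ x ^ 2 := by
    intro x
    rw [pdf_le_iff_aux ⟨σ₀ ^ 2, sq_nonneg σ₀⟩ ⟨σ₁ ^ 2, sq_nonneg σ₁⟩ (by exact pow_pos h₀ 2) (by exact pow_pos h₁ 2)]
    show -Real.log (σ₀ ^ 2) / 2 - x ^ 2 / (2 * σ₀ ^ 2) ≤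
        -Real.log (σ₁ ^ 2) / 2 - x ^ 2 / (2 * σ₁ ^ 2) ↔ _
    rw [div_form _ _ _ _ _ (by positivity) (by positivity), hK,
      div_le_iff₀ (by linarith)]
  have hcomp' : ∀ x : ℝ,
      gaussianPDFReal 0 ⟨σ₁ ^ 2, sq_nonneg σ₁⟩ x ≤ gaussianPDFReal 0 ⟨σ₀ ^ 2, sq_nonneg σ₀⟩ x ↔
        x ^ 2 ≤ α ^ 2 := by
    intro x
    rw [pdf_le_iff_aux ⟨σ₁ ^ 2, sq_nonneg σ₁⟩ ⟨σ₀ ^ 2, sq_nonneg σ₀⟩ (by exact pow_pos h₁ 2) (by exact pow_pos h₀ 2)]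
    show -Real.log (σ₁ ^ 2) / 2 - x ^ 2 / (2 * σ₁ ^ 2) ≤
        -Real.log (σ₀ ^ 2) / 2 - x ^ 2 / (2 * σ₀ ^ 2) ↔ _
    rw [div_form _ _ _ _ _ (by positivity) (by positivity), hK,
      le_div_iff₀ (by linarith)]
    constructor <;> intro h <;> nlinarith [h]
  set S : Set ℝ := {x : ℝ | x ^ 2 > α ^ 2} with hSdef
  have hS : MeasurableSet S := measurableSet_lt measurable_const (measurable_id.pow_const 2)
  set g : ℝ → ℝ := fun x => gaussianPDFReal 0 ⟨σ₁ ^ 2, sq_nonneg σ₁⟩ x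
      - gaussianPDFReal 0 ⟨σ₀ ^ 2, sq_nonneg σ₀⟩ x with hg
  have hgint : Integrable g := (integrable_gaussianPDFReal _ _).sub (integrable_gaussianPDFReal _ _)
  constructor
  constructor
  · exact ⟨S, hS, rfl⟩
  · rintro d ⟨A, hA, rfl⟩
    rw [hP₀, hP₁, toReal_gauss _ h₀, toReal_gauss _ h₁, toReal_gauss _ h₀, toReal_gauss _ h₁]
    rw [← integral_sub (integrable_gaussianPDFReal 0 ⟨σ₁ ^ 2, sq_nonneg σ₁⟩).integrableOn
      (integrable_gaussianPDFReal 0 ⟨σ₀ ^ 2, sq_nonneg σ₀⟩).integrableOn,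
      ← integral_sub (integrable_gaussianPDFReal 0 ⟨σ₁ ^ 2, sq_nonneg σ₁⟩).integrableOn
      (integrable_gaussianPDFReal 0 ⟨σ₀ ^ 2, sq_nonneg σ₀⟩).integrableOn]
    show (∫ x in A, g x) ≤ ∫ x in S, g x
    have step1 : (∫ x in A, g x) ≤ ∫ x in A ∩ S, g x := by
      rw [show (∫ x in A, g x) = ∫ x in A ∩ S ∪ A \ S, g x by rw [Set.inter_union_diff]]
      rw [setIntegral_union (Set.disjoint_sdiff_right.mono_left Set.inter_subset_right)
          (hA.diff hS) hgint.integrableOn hgint.integrableOn]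
      have hneg : (∫ x in A \ S, g x) ≤ 0 := by
        apply setIntegral_nonpos (hA.diff hS)
        intro x hx
        have hx2 : x ^ 2 ≤ α ^ 2 := le_of_not_gt hx.2
        have := (hcomp' x).mpr hx2
        simp only [hg]; linarith
      linarith
    have step2 : (∫ x in A ∩ S, g x) ≤ ∫ x in S, g x := by
      apply setIntegral_mono_set hgint.integrableOn
      · refine (ae_restrict_iff' hS).mpr (ae_of_all _ fun x hx => ?_)
        have hx2 : α ^ 2 ≤ x ^ 2 := le_of_lt hx
        have := (hcomp x).mpr hx2
        show (0:ℝ) ≤ g x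
        simp only [hg]; linarith
      · exact HasSubset.Subset.eventuallyLE Set.inter_subset_right
    linarith
  · rw [hP₀, hP₁, gauss_tail _ _ h₁ hα0, gauss_tail _ _ h₀ hα0]
    ring
end

section
/- Let yₙ ∈ ℝⁿ be a sequence of random vectors with yₙ ∼ N(0, Iₙ), and let xₙ ∈ ℝⁿ be a sequence of random vectors whose distribution is spherically symmetric (invariant under every orthogonal transformation of ℝⁿ) and such that ‖xₙ‖₂ → σ almost surely for some constant σ ≥ 0. Assume xₙ and yₙ are independent for each n. Then the inner product xₙᵀ yₙ converges weakly (in distribution) to the Gaussian distribution N(0, σ²) as n → ∞. -/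
open MeasureTheory ProbabilityTheory Matrix Filter Topology Real
open scoped NNReal ENNReal

open MeasureTheory ProbabilityTheory Matrix Filter Topology
open scoped NNReal

/-- The law of a vector of `k` i.i.d. standard Gaussian entries, i.e. `N(0, I_k)`. -/
noncomputable def stdGaussianVec (k : ℕ) : Measure (Fin k → ℝ) :=
  Measure.pi fun _ => gaussianReal 0 1

lemma conv_pdf (w₁ w₂ : ℝ≥0) (h1 : w₁ ≠ 0) (h2 : w₂ ≠ 0) (z : ℝ) :
    ∫ x : ℝ, gaussianPDFReal x w₂ z * gaussianPDFReal 0 w₁ x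
      = gaussianPDFReal 0 (w₁ + w₂) z := by
  have hw1 : (0:ℝ) < w₁ := lt_of_le_of_ne w₁.coe_nonneg (by exact_mod_cast (Ne.symm h1))
  have hw2 : (0:ℝ) < w₂ := lt_of_le_of_ne w₂.coe_nonneg (by exact_mod_cast (Ne.symm h2))
  set W : ℝ := (w₁ : ℝ) + w₂ with hWdef
  have hW : (0:ℝ) < W := by positivity
  set B : ℝ := W / (2 * w₁ * w₂) with hBdef
  have hB : (0:ℝ) < B := by positivity
  set d : ℝ := w₁ * z / W with hddef
  set C : ℝ := (Real.sqrt (2 * π * w₂))⁻¹ * (Real.sqrt (2 * π * w₁))⁻¹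
      * Real.exp (- z ^ 2 / (2 * W)) with hCdef
  have key : ∀ x : ℝ, gaussianPDFReal x w₂ z * gaussianPDFReal 0 w₁ x
      = C * Real.exp (- B * (x - d) ^ 2) := by
    intro x
    have hexp : - (z - x) ^ 2 / (2 * (w₂:ℝ)) + - (x - 0) ^ 2 / (2 * (w₁:ℝ))
        = - z ^ 2 / (2 * W) + - B * (x - d) ^ 2 := by
      rw [hddef, hBdef, hWdef]
      field_simp
      ring
    simp only [gaussianPDFReal, hCdef]
    rw [mul_mul_mul_comm, ← Real.exp_add, hexp, Real.exp_add]
    ring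
  rw [integral_congr_ae (ae_of_all _ key), integral_const_mul,
    integral_sub_right_eq_self (fun x : ℝ => Real.exp (- B * x ^ 2)) d,
    integral_gaussian]
  have hC2 : ((w₁ + w₂ : ℝ≥0) : ℝ) = W := by rw [hWdef]; push_cast; ring
  rw [gaussianPDFReal]
  rw [hCdef]
  have hsq : (Real.sqrt (2 * π * w₂))⁻¹ * (Real.sqrt (2 * π * w₁))⁻¹ * Real.sqrt (π / B)
      = (Real.sqrt (2 * π * W))⁻¹ := by
    rw [← Real.sqrt_inv, ← Real.sqrt_inv, ← Real.sqrt_inv,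
      ← Real.sqrt_mul (by positivity), ← Real.sqrt_mul (by positivity)]
    congr 1
    field_simp [hBdef]
    rw [hBdef]; field_simp
  have hπ : 0 < π := Real.pi_pos
  calc (Real.sqrt (2 * π * w₂))⁻¹ * (Real.sqrt (2 * π * w₁))⁻¹ * Real.exp (- z ^ 2 / (2 * W))
        * Real.sqrt (π / B)
      = ((Real.sqrt (2 * π * w₂))⁻¹ * (Real.sqrt (2 * π * w₁))⁻¹ * Real.sqrt (π / B))
        * Real.exp (- z ^ 2 / (2 * W)) := by ring
    _ = (Real.sqrt (2 * π * ((w₁ : ℝ) + (w₂ : ℝ))))⁻¹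
        * Real.exp (- (z - 0) ^ 2 / (2 * ((w₁ : ℝ) + (w₂ : ℝ)))) := by
        rw [hsq, ← hWdef]
        norm_num

lemma continuous_gaussianPDFReal_mean (w : ℝ≥0) (z : ℝ) :
    Continuous fun x : ℝ => gaussianPDFReal x w z := by
  unfold gaussianPDFReal
  fun_prop

lemma conv_pdf_lintegral (w₁ w₂ : ℝ≥0) (h1 : w₁ ≠ 0) (h2 : w₂ ≠ 0) (z : ℝ) :
    ∫⁻ x : ℝ, gaussianPDF 0 w₁ x * gaussianPDF x w₂ z = gaussianPDF 0 (w₁ + w₂) z := by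
  have hw2 : (0:ℝ) < w₂ := lt_of_le_of_ne w₂.coe_nonneg (by exact_mod_cast (Ne.symm h2))
  have hnn : ∀ x : ℝ, 0 ≤ gaussianPDFReal x w₂ z * gaussianPDFReal 0 w₁ x :=
    fun x => mul_nonneg (gaussianPDFReal_nonneg _ _ _) (gaussianPDFReal_nonneg _ _ _)
  have hmeas : AEStronglyMeasurable
      (fun x : ℝ => gaussianPDFReal x w₂ z * gaussianPDFReal 0 w₁ x) volume :=
    (((continuous_gaussianPDFReal_mean w₂ z).measurable).mul
      (measurable_gaussianPDFReal 0 w₁)).aestronglyMeasurable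
  have hbound : ∀ x : ℝ, ‖gaussianPDFReal x w₂ z * gaussianPDFReal 0 w₁ x‖
      ≤ (Real.sqrt (2 * π * w₂))⁻¹ * gaussianPDFReal 0 w₁ x := by
    intro x
    rw [Real.norm_eq_abs, abs_of_nonneg (hnn x)]
    apply mul_le_mul_of_nonneg_right _ (gaussianPDFReal_nonneg _ _ _)
    unfold gaussianPDFReal
    apply mul_le_of_le_one_right (by positivity)
    rw [Real.exp_le_one_iff]
    apply div_nonpos_of_nonpos_of_nonneg
    · simp [sq_nonneg]
    · positivity
  have hint : Integrable (fun x : ℝ => gaussianPDFReal x w₂ z * gaussianPDFReal 0 w₁ x) :=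
    Integrable.mono' ((integrable_gaussianPDFReal 0 w₁).const_mul _) hmeas
      (ae_of_all _ hbound)
  simp only [gaussianPDF]
  calc ∫⁻ x : ℝ, ENNReal.ofReal (gaussianPDFReal 0 w₁ x)
        * ENNReal.ofReal (gaussianPDFReal x w₂ z)
      = ∫⁻ x : ℝ, ENNReal.ofReal (gaussianPDFReal x w₂ z * gaussianPDFReal 0 w₁ x) := by
        congr 1
        funext x
        rw [← ENNReal.ofReal_mul (gaussianPDFReal_nonneg _ _ _), mul_comm]
    _ = ENNReal.ofReal (∫ x : ℝ, gaussianPDFReal x w₂ z * gaussianPDFReal 0 w₁ x) :=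
        (ofReal_integral_eq_lintegral_ofReal hint (ae_of_all _ hnn)).symm
    _ = ENNReal.ofReal (gaussianPDFReal 0 (w₁ + w₂) z) := by rw [conv_pdf w₁ w₂ h1 h2 z]

lemma gaussian_sum (w₁ w₂ : ℝ≥0) :
    ((gaussianReal 0 w₁).prod (gaussianReal 0 w₂)).map (fun q : ℝ × ℝ => q.1 + q.2)
      = gaussianReal 0 (w₁ + w₂) := by
  rcases eq_or_ne w₂ 0 with rfl | h2
  · rw [add_zero, gaussianReal_zero_var, Measure.prod_dirac,
      Measure.map_map (by fun_prop) (by fun_prop),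
      show ((fun q : ℝ × ℝ => q.1 + q.2) ∘ fun x : ℝ => (x, (0:ℝ))) = id from
        funext fun x => add_zero x,
      Measure.map_id]
  rcases eq_or_ne w₁ 0 with rfl | h1
  · rw [zero_add, gaussianReal_zero_var, Measure.dirac_prod,
      Measure.map_map (by fun_prop) (by fun_prop),
      show ((fun q : ℝ × ℝ => q.1 + q.2) ∘ Prod.mk (0:ℝ)) = id from
        funext fun x => zero_add x,
      Measure.map_id]
  have hW : w₁ + w₂ ≠ 0 := by simp [add_eq_zero, h1]
  ext A hA
  rw [Measure.map_apply (by fun_prop) hA,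
    Measure.prod_apply (hA.preimage (by fun_prop))]
  have hjm : Measurable fun p : ℝ × ℝ => gaussianPDF p.1 w₂ p.2 := by
    apply Measurable.ennreal_ofReal
    apply Continuous.measurable
    unfold gaussianPDFReal
    fun_prop
  have hslice : ∀ x : ℝ,
      gaussianReal 0 w₂ (Prod.mk x ⁻¹' ((fun q : ℝ × ℝ => q.1 + q.2) ⁻¹' A))
        = ∫⁻ t in A, gaussianPDF x w₂ t := by
    intro x
    have h1' : (Prod.mk x ⁻¹' ((fun q : ℝ × ℝ => q.1 + q.2) ⁻¹' A))
        = (fun y : ℝ => x + y) ⁻¹' A := rfl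
    rw [h1', ← Measure.map_apply (by fun_prop) hA, gaussianReal_map_const_add,
      zero_add, gaussianReal_apply _ h2]
  simp_rw [hslice]
  have hmeasG : Measurable fun x : ℝ => ∫⁻ t in A, gaussianPDF x w₂ t :=
    Measurable.lintegral_prod_right hjm
  rw [gaussianReal_of_var_ne_zero 0 h1,
    lintegral_withDensity_eq_lintegral_mul _ (measurable_gaussianPDF 0 w₁) hmeasG]
  simp only [Pi.mul_apply]
  have hne : ∀ x : ℝ, gaussianPDF 0 w₁ x ≠ ∞ := fun x => ENNReal.ofReal_ne_top
  have hpull : ∫⁻ x : ℝ, gaussianPDF 0 w₁ x * ∫⁻ t in A, gaussianPDF x w₂ t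
      = ∫⁻ x : ℝ, ∫⁻ t in A, gaussianPDF 0 w₁ x * gaussianPDF x w₂ t :=
    lintegral_congr fun x => (lintegral_const_mul' _ _ (hne x)).symm
  rw [hpull, lintegral_lintegral_swap]
  · simp_rw [conv_pdf_lintegral w₁ w₂ h1 h2]
    rw [gaussianReal_apply _ hW]
  · exact (((measurable_gaussianPDF 0 w₁).comp measurable_fst).mul
      (hjm.comp (measurable_fst.prodMk measurable_snd))).aemeasurable

instance (k : ℕ) : IsProbabilityMeasure (stdGaussianVec k) := by
  unfold stdGaussianVec; infer_instance

lemma stdGaussianVec_map_dot : ∀ (n : ℕ) (v : Fin n → ℝ),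
    (stdGaussianVec n).map (fun b => ∑ i, v i * b i)
      = gaussianReal 0 ⟨∑ i, v i ^ 2, by positivity⟩ := by
  intro n
  induction n with
  | zero =>
    intro v
    have : (fun b : Fin 0 → ℝ => ∑ i, v i * b i) = fun _ => (0:ℝ) := by
      funext b; simp
    rw [this, Measure.map_const]
    simp only [measure_univ, one_smul]
    have : (⟨∑ i : Fin 0, v i ^ 2, by positivity⟩ : ℝ≥0) = 0 := by
      ext; simp
    rw [this]; exact (gaussianReal_zero_var 0).symm
  | succ n ih =>
    intro v
    have hmp := measurePreserving_piFinSuccAbove (fun _ : Fin (n+1) => gaussianReal 0 1) 0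
    have he : Measure.map (MeasurableEquiv.piFinSuccAbove (fun _ : Fin (n+1) => ℝ) 0)
        (stdGaussianVec (n+1)) = (gaussianReal 0 1).prod (stdGaussianVec n) := hmp.map_eq
    have hcomp : (fun b : Fin (n+1) → ℝ => ∑ i, v i * b i)
        = (fun p : ℝ × (Fin n → ℝ) => v 0 * p.1 + ∑ j, v j.succ * p.2 j)
          ∘ (MeasurableEquiv.piFinSuccAbove (fun _ : Fin (n+1) => ℝ) 0) := by
      funext b
      simp [MeasurableEquiv.piFinSuccAbove, Fin.sum_univ_succ, Fin.insertNthEquiv,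
        Fin.zero_succAbove, Fin.tail]
    rw [hcomp, ← Measure.map_map (by fun_prop) (MeasurableEquiv.measurable _), he]
    have hcomp2 : (fun p : ℝ × (Fin n → ℝ) => v 0 * p.1 + ∑ j, v j.succ * p.2 j)
        = (fun q : ℝ × ℝ => q.1 + q.2)
          ∘ Prod.map (fun t : ℝ => v 0 * t) (fun b : Fin n → ℝ => ∑ j, v j.succ * b j) := by
      funext p; rfl
    rw [hcomp2, ← Measure.map_map (by fun_prop) (by fun_prop),
      ← Measure.map_prod_map _ _ (by fun_prop) (by fun_prop),
      ih (fun j => v j.succ), gaussianReal_map_const_mul,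
      show v 0 * 0 = 0 from mul_zero _,
      show (NNReal.mk (v 0 ^ 2) (sq_nonneg _) * 1 : ℝ≥0) = NNReal.mk (v 0 ^ 2) (sq_nonneg _) from mul_one _]
    refine (gaussian_sum _ _).trans ?_
    congr 1
    ext
    push_cast
    exact (Fin.sum_univ_succ (fun i => v i ^ 2)).symm

lemma bcf_integrable {α : Type*} [MeasurableSpace α] (ν : Measure α) [IsFiniteMeasure ν]
    (f : BoundedContinuousFunction ℝ ℝ) {g : α → ℝ} (hg : AEStronglyMeasurable g ν) :
    Integrable (fun a => f (g a)) ν :=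
  Integrable.mono' (integrable_const ‖f‖) (f.continuous.comp_aestronglyMeasurable hg)
    (ae_of_all _ fun _ => f.norm_coe_le_norm _)


/-- **Asymptotic Gaussianity of the inner product of a spherically symmetric vector
with an independent standard Gaussian.**  If `yₙ ∼ N(0, Iₙ)`, `xₙ` is spherically
symmetric with `‖xₙ‖₂ → σ` almost surely and independent of `yₙ`, then `xₙᵀyₙ`
converges in distribution to `N(0, σ²)` (weak convergence tested against bounded
continuous functions). -/
theorem inner_spherical_with_gaussian_tendsto {Ω : Type*} [MeasurableSpace Ω]
    (μ : Measure Ω) [IsProbabilityMeasure μ] (σ : ℝ) (hσ : 0 ≤ σ)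
    (x y : (n : ℕ) → Ω → Fin n → ℝ)
    (hx : ∀ n, Measurable (x n)) (hy : ∀ n, Measurable (y n))
    (hsym : ∀ (n : ℕ) (U : Matrix (Fin n) (Fin n) ℝ), Uᵀ * U = 1 →
      Measure.map (fun ω => U *ᵥ x n ω) μ = Measure.map (x n) μ)
    (hylaw : ∀ n, Measure.map (y n) μ = stdGaussianVec n)
    (hindep : ∀ n, IndepFun (x n) (y n) μ)
    (hnorm : ∀ᵐ ω ∂μ, Tendsto (fun n => Real.sqrt (∑ i, x n ω i ^ 2)) atTop (𝓝 σ)) :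
    ∀ f : BoundedContinuousFunction ℝ ℝ,
      Tendsto (fun n => ∫ ω, f (∑ i, x n ω i * y n ω i) ∂μ) atTop
        (𝓝 (∫ t, f t ∂(gaussianReal 0 ⟨σ ^ 2, sq_nonneg σ⟩))) := by
  intro f
  set γ : Measure ℝ := gaussianReal 0 1 with hγdef
  set G : ℝ → ℝ := fun r => ∫ u, f (r * u) ∂γ with hGdef
  have hGcont : Continuous G := by
    rw [hGdef]
    apply continuous_of_dominated (bound := fun _ => ‖f‖)
    · exact fun r => (f.continuous.comp (continuous_const.mul continuous_id)
        ).aestronglyMeasurable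
    · exact fun r => ae_of_all _ fun u => f.norm_coe_le_norm _
    · exact integrable_const _
    · exact ae_of_all _ fun u => f.continuous.comp (continuous_id.mul continuous_const)
  have hGbound : ∀ r, ‖G r‖ ≤ ‖f‖ := by
    intro r
    calc ‖G r‖ ≤ ∫ u, ‖f‖ ∂γ :=
          norm_integral_le_of_norm_le (integrable_const _)
            (ae_of_all _ fun u => f.norm_coe_le_norm _)
      _ = ‖f‖ := by simp
  have hscale : ∀ r : ℝ, ∫ t, f t ∂(gaussianReal 0 ⟨r ^ 2, sq_nonneg r⟩) = G r := by
    intro r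
    have hmap : γ.map (fun u => r * u) = gaussianReal 0 ⟨r ^ 2, sq_nonneg r⟩ := by
      rw [hγdef, gaussianReal_map_const_mul, mul_zero, mul_one]; rfl
    rw [← hmap, integral_map (by fun_prop) f.continuous.aestronglyMeasurable, hGdef]
  have hkey : ∀ n, ∫ ω, f (∑ i, x n ω i * y n ω i) ∂μ
      = ∫ ω, G (Real.sqrt (∑ i, x n ω i ^ 2)) ∂μ := by
    intro n
    haveI : IsProbabilityMeasure (μ.map (x n)) := Measure.isProbabilityMeasure_map (hx n).aemeasurable
    have hjoint : μ.map (fun ω => (x n ω, y n ω)) = (μ.map (x n)).prod (stdGaussianVec n) := by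
      rw [← hylaw n]
      exact (indepFun_iff_map_prod_eq_prod_map_map (hx n).aemeasurable
        (hy n).aemeasurable).mp (hindep n)
    have hgcont : Continuous (fun p : (Fin n → ℝ) × (Fin n → ℝ) => ∑ i, p.1 i * p.2 i) := by
      fun_prop
    calc ∫ ω, f (∑ i, x n ω i * y n ω i) ∂μ
        = ∫ p : (Fin n → ℝ) × (Fin n → ℝ), f (∑ i, p.1 i * p.2 i)
            ∂((μ.map (x n)).prod (stdGaussianVec n)) := by
          rw [← hjoint]
          exact (integral_map ((hx n).prodMk (hy n)).aemeasurable
            (show AEStronglyMeasurable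
              (fun p : (Fin n → ℝ) × (Fin n → ℝ) => f (∑ i, p.1 i * p.2 i)) _ from
              (f.continuous.comp hgcont).aestronglyMeasurable)).symm
      _ = ∫ a, ∫ b, f (∑ i, a i * b i) ∂(stdGaussianVec n) ∂(μ.map (x n)) := by
          exact integral_prod _ (bcf_integrable _ f hgcont.aestronglyMeasurable)
      _ = ∫ a, G (Real.sqrt (∑ i, a i ^ 2)) ∂(μ.map (x n)) := by
          apply integral_congr_ae (ae_of_all _ ?_)
          intro a
          have hsum : (0:ℝ) ≤ ∑ i, a i ^ 2 := by positivity
          have h1 : ∫ b, f (∑ i, a i * b i) ∂(stdGaussianVec n)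
              = ∫ t, f t ∂(gaussianReal 0 ⟨∑ i, a i ^ 2, hsum⟩) := by
            rw [← stdGaussianVec_map_dot n a,
              integral_map (Finset.measurable_sum Finset.univ fun i _ =>
                by fun_prop).aemeasurable
                f.continuous.aestronglyMeasurable]
          have h2 : (⟨(Real.sqrt (∑ i, a i ^ 2)) ^ 2,
              sq_nonneg _⟩ : ℝ≥0) = ⟨∑ i, a i ^ 2, hsum⟩ := by
            ext
            exact Real.sq_sqrt hsum
          rw [h1, ← hscale (Real.sqrt (∑ i, a i ^ 2)), h2]
      _ = ∫ ω, G (Real.sqrt (∑ i, x n ω i ^ 2)) ∂μ := by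
          exact integral_map (hx n).aemeasurable
            (show AEStronglyMeasurable
              (fun a : Fin n → ℝ => G (Real.sqrt (∑ i, a i ^ 2))) _ from
              (hGcont.comp (show Continuous fun a : Fin n → ℝ =>
                Real.sqrt (∑ i, a i ^ 2) by fun_prop)).aestronglyMeasurable)
  simp_rw [hkey]
  rw [hscale σ]
  have hGσ : G σ = ∫ _ω, G σ ∂μ := by simp
  rw [hGσ]
  apply tendsto_integral_of_dominated_convergence (fun _ => ‖f‖)
  · intro n
    exact ((hGcont.comp (show Continuous fun a : Fin n → ℝ =>
      Real.sqrt (∑ i, a i ^ 2) by fun_prop)).measurable.comp (hx n)).aestronglyMeasurable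
  · exact integrable_const _
  · exact fun n => ae_of_all _ fun ω => hGbound _
  · filter_upwards [hnorm] with ω hω
    exact (hGcont.continuousAt.tendsto).comp hω
end
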